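/- Part (a) of the avoidability exponent computation for ABCBA.CBABC: if a word w is (4/3)-free, then w contains no occurrence of the formula ABCBA.CBABC. Concretely, if h is a non-erasing morphism with a=|h(A)|, b=|h(B)|, c=|h(C)|, the repetitions forced by occurrences of ABCBA, CBABC, BAB, BCB in a (4/3)-free word yield the inequalities 2a < 2b+c, 2c < a+2b, 2b < a, 2b < c, whose sum gives a contradiction. -/
import Mathlib


/-- The finite factor of the infinite word `w` starting at position `i` of length `n`. -/
def extract {α : Type*} (w : ℕ → α) (i n : ℕ) : List α :=
  (List.range n).map (fun k => w (i + k))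

/-- `u` is a (finite) factor of the infinite word `w`. -/
def IsFactorOf {α : Type*} (u : List α) (w : ℕ → α) : Prop :=
  ∃ i, u = extract w i u.length

/-- A morphism (given on variables/letters) is non-erasing. -/
def NonErasing {V α : Type*} (h : V → List α) : Prop := ∀ v, h v ≠ []

/-- The image of a pattern `p` under the morphism induced by `h`. -/
def patImage {V α : Type*} (h : V → List α) (p : List V) : List α :=
  (p.map h).flatten

/-- `h` is an occurrence of the formula `f` (a set of fragments) in the infinite word `w`:
`h` is non-erasing and the `h`-image of every fragment of `f` is a factor of `w`. -/
def OccursIn {V α : Type*} (f : Set (List V)) (h : V → List α) (w : ℕ → α) : Prop :=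
  NonErasing h ∧ ∀ p ∈ f, IsFactorOf (patImage h p) w

/-- The infinite word `w` avoids the formula `f`. -/
def Avoids {V α : Type*} (w : ℕ → α) (f : Set (List V)) : Prop :=
  ∀ h : V → List α, ¬ OccursIn f h w

/-- An infinite word is recurrent if every factor occurs infinitely often. -/
def Recurrent {α : Type*} (w : ℕ → α) : Prop :=
  ∀ u : List α, IsFactorOf u w → ∀ N, ∃ i ≥ N, u = extract w i u.length

/-- An infinite word is square-free if it has no factor `uu` with `u` nonempty. -/
def SquareFree {α : Type*} (w : ℕ → α) : Prop :=
  ∀ u : List α, u ≠ [] → ¬ IsFactorOf (u ++ u) w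

/-- The formula `f'` divides the formula `f`: some non-erasing morphism maps every
fragment of `f'` to a factor of some fragment of `f`. -/
def Divides {V' V : Type*} (f' : Set (List V')) (f : Set (List V)) : Prop :=
  ∃ h : V' → List V, NonErasing h ∧ ∀ q ∈ f', ∃ p ∈ f, patImage h q <:+: p

/-- The avoidability index of a formula: the least alphabet size over which there is an
infinite word avoiding it. -/
noncomputable def lamIdx {V : Type*} (f : Set (List V)) : ℕ :=
  sInf {n : ℕ | ∃ w : ℕ → Fin n, Avoids w f}

/-- A formula is avoidable if some infinite word over some finite alphabet avoids it. -/
def Avoidable {V : Type*} (f : Set (List V)) : Prop :=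
  ∃ (n : ℕ) (w : ℕ → Fin n), Avoids w f

/-- An infinite word is `r`-free: every factor of the form `x ++ y ++ x` with `x ≠ []`
(a repetition of period `|xy|` and exponent `|xyx|/|xy|`) has exponent `< r`. -/
def AlphaFree {α : Type*} (w : ℕ → α) (r : ℝ) : Prop :=
  ∀ x y : List α, x ≠ [] → IsFactorOf (x ++ y ++ x) w →
    ((2 * x.length + y.length : ℝ) / (x.length + y.length)) < r

/-- An infinite word is `r⁺`-free: every such repetition has exponent `≤ r`. -/
def AlphaPlusFree {α : Type*} (w : ℕ → α) (r : ℝ) : Prop :=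
  ∀ x y : List α, x ≠ [] → IsFactorOf (x ++ y ++ x) w →
    ((2 * x.length + y.length : ℝ) / (x.length + y.length)) ≤ r

/-- A finite word is `r⁺`-free. -/
def AlphaPlusFreeList {α : Type*} (u : List α) (r : ℝ) : Prop :=
  ∀ x y : List α, x ≠ [] → (x ++ y ++ x) <:+: u →
    ((2 * x.length + y.length : ℝ) / (x.length + y.length)) ≤ r

/-- The formula ABCBA.CBABC, with variables A=0, B=1, C=2. -/
def tbFormula : Set (List (Fin 3)) := {[0,1,2,1,0], [2,1,0,1,2]}

lemma extract_length {α : Type*} (w : ℕ → α) (i n : ℕ) : (extract w i n).length = n := by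
  simp [extract]

lemma extract_add {α : Type*} (w : ℕ → α) (i p q : ℕ) :
    extract w i (p + q) = extract w i p ++ extract w (i + p) q := by
  simp only [extract, List.range_add, List.map_append, List.map_map]
  congr 1
  apply List.map_congr_left
  intro k _
  simp [Function.comp, add_assoc]

lemma factor_of_infix {α : Type*} {u v : List α} {w : ℕ → α}
    (hinf : u <:+: v) (hfac : IsFactorOf v w) : IsFactorOf u w := by
  obtain ⟨s, t, hst⟩ := hinf
  obtain ⟨i, hi⟩ := hfac
  refine ⟨i + s.length, ?_⟩
  have hlen : v.length = s.length + (u.length + t.length) := by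
    subst hst; simp
  rw [hlen, extract_add, extract_add] at hi
  have h1 : s ++ (u ++ t) = extract w i s.length ++
      (extract w (i + s.length) u.length ++
        extract w (i + s.length + u.length) t.length) := by
    rw [← List.append_assoc, hst, hi]
  have h2 := (List.append_inj h1 (by simp [extract_length])).2
  exact (List.append_inj h2 (by simp [extract_length])).1

lemma rat_ineq (a y : ℕ) (ha : 0 < a)
    (h : ((2 * a + y : ℝ)) / (a + y) < 4 / 3) : 6 * a + 3 * y < 4 * a + 4 * y := by
  have hd : (0 : ℝ) < (a : ℝ) + y := by
    have : (0 : ℝ) < (a : ℝ) := by exact_mod_cast ha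
    positivity
  rw [div_lt_div_iff₀ hd (by norm_num)] at h
  have : (6 * a + 3 * y : ℝ) < 4 * a + 4 * y := by ring_nf at h ⊢; linarith
  exact_mod_cast this

/-- every (4/3)-free word contains no occurrence of ABCBA.CBABC.
Concretely, any occurrence `h` with a=|h(A)|, b=|h(B)|, c=|h(C)| would have to satisfy
2a < 2b+c, 2c < a+2b, 2b < a and 2b < c, which is contradictory. -/
theorem stmt4 {β : Type*} (w : ℕ → β) (hfree : AlphaFree w (4/3)) :
    (∀ h : Fin 3 → List β, OccursIn tbFormula h w →
      2 * (h 0).length < 2 * (h 1).length + (h 2).length ∧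
      2 * (h 2).length < (h 0).length + 2 * (h 1).length ∧
      2 * (h 1).length < (h 0).length ∧
      2 * (h 1).length < (h 2).length) ∧
    Avoids w tbFormula := by
  have key : ∀ h : Fin 3 → List β, ¬ OccursIn tbFormula h w := by
    intro h ⟨hne, hfac⟩
    have hA := hne 0
    have hB := hne 1
    have hC := hne 2
    have f1 : IsFactorOf (h 0 ++ (h 1 ++ h 2 ++ h 1) ++ h 0) w := by
      have := hfac [0,1,2,1,0] (Or.inl rfl)
      simpa [patImage, List.append_assoc] using this
    have f2 : IsFactorOf (h 2 ++ (h 1 ++ h 0 ++ h 1) ++ h 2) w := by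
      have := hfac [2,1,0,1,2] (Or.inr rfl)
      simpa [patImage, List.append_assoc] using this
    have f3 : IsFactorOf (h 1 ++ h 0 ++ h 1) w := by
      refine factor_of_infix ⟨h 2, h 2, ?_⟩ f2
      simp [List.append_assoc]
    have f4 : IsFactorOf (h 1 ++ h 2 ++ h 1) w := by
      refine factor_of_infix ⟨h 0, h 0, ?_⟩ f1
      simp [List.append_assoc]
    have i1 := rat_ineq _ _ (List.length_pos_iff.mpr hA) (hfree (h 0) (h 1 ++ h 2 ++ h 1) hA f1)
    have i2 := rat_ineq _ _ (List.length_pos_iff.mpr hC) (hfree (h 2) (h 1 ++ h 0 ++ h 1) hC f2)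
    have i3 := rat_ineq _ _ (List.length_pos_iff.mpr hB) (hfree (h 1) (h 0) hB
      (by simpa [List.append_assoc] using f3))
    have i4 := rat_ineq _ _ (List.length_pos_iff.mpr hB) (hfree (h 1) (h 2) hB
      (by simpa [List.append_assoc] using f4))
    simp only [List.length_append] at i1 i2
    omega
  exact ⟨fun h hocc => (key h hocc).elim, fun h hocc => key h hocc⟩
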